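/- If (X,f) is weakly mixing, positively expansive, and has the shadowing property, then it has the periodic specification property: for every ε>0 there exists M>0 such that for every k ≥ 2, points x_1,…,x_k, integers 0 ≤ a_1 ≤ b_1 < … < a_k ≤ b_k with a_i − b_{i−1} ≥ M, and every integer p ≥ M + b_k − a_1, there exists z ∈ X with f^p(z) = z and d(f^j(z), f^j(x_i)) < ε for all a_i ≤ j ≤ b_i, 1 ≤ i ≤ k. -/

import Mathlib

open Set Function

variable {X : Type*}

/-- A `δ`-pseudo-orbit of `f`. -/
def IsPseudoOrbit [MetricSpace X] (f : X → X) (δ : ℝ) (x : ℕ → X) : Prop :=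
  ∀ n : ℕ, dist (f (x n)) (x (n + 1)) < δ

/-- `z` ε-traces the sequence `x`. -/
def Traces [MetricSpace X] (f : X → X) (ε : ℝ) (z : X) (x : ℕ → X) : Prop :=
  ∀ n : ℕ, dist (f^[n] z) (x n) < ε

/-- The shadowing property. -/
def HasShadowing [MetricSpace X] (f : X → X) : Prop :=
  ∀ ε > (0 : ℝ), ∃ δ > (0 : ℝ), ∀ x : ℕ → X, IsPseudoOrbit f δ x → ∃ z : X, Traces f ε z x

/-- The shadowing property of the restriction of `f` to an invariant set `S`. -/
def HasShadowingOn [MetricSpace X] (f : X → X) (S : Set X) : Prop :=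
  ∀ ε > (0 : ℝ), ∃ δ > (0 : ℝ), ∀ x : ℕ → X, (∀ n, x n ∈ S) → IsPseudoOrbit f δ x →
    ∃ z ∈ S, Traces f ε z x

/-- Non-wandering point. -/
def NonWanderingPt [TopologicalSpace X] (f : X → X) (x : X) : Prop :=
  ∀ U ∈ nhds x, ∃ k : ℕ, 1 ≤ k ∧ ∃ y ∈ U, f^[k] y ∈ U

/-- The (forward) orbit of a point. -/
def orbitSet (f : X → X) (x : X) : Set X := Set.range fun n : ℕ => f^[n] x

/-- Recurrent point. -/
def RecurrentPt [TopologicalSpace X] (f : X → X) (x : X) : Prop :=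
  ∀ U ∈ nhds x, ∃ k : ℕ, 1 ≤ k ∧ f^[k] x ∈ U

/-- Minimal point: every point of the orbit closure has `x` in its own orbit closure,
i.e. the orbit closure of `x` is a minimal set. -/
def MinimalPt [TopologicalSpace X] (f : X → X) (x : X) : Prop :=
  ∀ y ∈ closure (orbitSet f x), x ∈ closure (orbitSet f y)

/-- Regularly recurrent point. -/
def RegRecPt [TopologicalSpace X] (f : X → X) (x : X) : Prop :=
  ∀ U ∈ nhds x, ∃ k : ℕ, 1 ≤ k ∧ ∀ n : ℕ, f^[k * n] x ∈ U

/-- Equicontinuity of the family of iterates of `f`. -/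
def EquicontinuousMap [MetricSpace X] (f : X → X) : Prop :=
  ∀ ε > (0 : ℝ), ∃ δ > (0 : ℝ), ∀ x y : X, dist x y < δ →
    ∀ n : ℕ, dist (f^[n] x) (f^[n] y) < ε

/-- `u` is a sensitive point of the subsystem on `S`. -/
def SensitivePtOn [MetricSpace X] (f : X → X) (S : Set X) (u : X) : Prop :=
  ∃ δ > (0 : ℝ), ∀ U ∈ nhds u, ∃ n : ℕ, ∃ a ∈ U ∩ S, ∃ b ∈ U ∩ S,
    dist (f^[n] a) (f^[n] b) > δ

/-- `u` is a sensitive point of `(X,f)`. -/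
def SensitivePt [MetricSpace X] (f : X → X) (u : X) : Prop :=
  ∃ δ > (0 : ℝ), ∀ U ∈ nhds u, ∃ n : ℕ, ∃ a ∈ U, ∃ b ∈ U,
    dist (f^[n] a) (f^[n] b) > δ

/-- Topological transitivity. -/
def TopTransitive {Y : Type*} [TopologicalSpace Y] (g : Y → Y) : Prop :=
  ∀ U V : Set Y, IsOpen U → U.Nonempty → IsOpen V → V.Nonempty →
    ∃ n : ℕ, 1 ≤ n ∧ (g^[n] '' U ∩ V).Nonempty

/-- Weak mixing: the product system is transitive. -/
def WeaklyMixing [TopologicalSpace X] (f : X → X) : Prop :=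
  TopTransitive (fun p : X × X => (f p.1, f p.2))

/-- Strong mixing. -/
def StronglyMixing {Y : Type*} [TopologicalSpace Y] (g : Y → Y) : Prop :=
  ∀ U V : Set Y, IsOpen U → U.Nonempty → IsOpen V → V.Nonempty →
    ∃ N : ℕ, ∀ n ≥ N, (g^[n] '' U ∩ V).Nonempty

/-- The shift map on the full shift over `d` symbols. -/
def shiftMap (d : ℕ) : (ℕ → Fin d) → (ℕ → Fin d) := fun x n => x (n + 1)

/-- `π` is a factor map from the subsystem `(Y, f^[m])` onto the full shift on `d` symbols. -/
def FactorOntoShift [TopologicalSpace X] (f : X → X) (m : ℕ) (Y : Set X) (d : ℕ)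
    (π : X → (ℕ → Fin d)) : Prop :=
  ContinuousOn π Y ∧ π '' Y = Set.univ ∧ ∀ y ∈ Y, π (f^[m] y) = shiftMap d (π y)

/-- Positively expansive with expansive constant β. -/
def PosExpansive [MetricSpace X] (f : X → X) (β : ℝ) : Prop :=
  0 < β ∧ ∀ x y : X, x ≠ y → ∃ n : ℕ, dist (f^[n] x) (f^[n] y) > β

/-!
Weak mixing makes `f` chain mixing: for every `δ > 0` there is `N` such that any two points are
joined by a `δ`-chain of every length `m ≥ N`. Indeed, weak mixing yields `δ`-chains from `v` to
itself of two consecutive lengths, hence of all large lengths, and compactness makes the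
threshold uniform in the endpoints. Joining the orbit segments
`f^[a i] (x i), …, f^[b i] (x i)` by such chains, and closing up with one more chain of length
`a 0 + p - b (k - 1)`, gives a `δ`-chain of length `p` from `f^[a 0] (x 0)` back to itself. Its
periodic repetition is a `δ`-pseudo-orbit, and a point shadowing it is `p`-periodic, because it
and its `p`-th image shadow the same sequence and `f` is positively expansive.
-/

open Filter Metric

section Chains

variable [MetricSpace X] {f : X → X} {δ : ℝ}

def IsChainOn (f : X → X) (δ : ℝ) (c : ℕ → X) (s e : ℕ) : Prop :=
  ∀ t, s ≤ t → t < e → dist (f (c t)) (c (t + 1)) < δ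

def HasChain (f : X → X) (δ : ℝ) (n : ℕ) (u v : X) : Prop :=
  ∃ c : ℕ → X, c 0 = u ∧ c n = v ∧ IsChainOn f δ c 0 n

def ChainMixing (f : X → X) : Prop :=
  ∀ δ > 0, ∀ᶠ n in atTop, ∀ u v : X, HasChain f δ n u v

def glueAt {Y : Type*} (T : ℕ) (c₁ c₂ : ℕ → Y) : ℕ → Y := fun t => if t ≤ T then c₁ t else c₂ t

lemma glueAt_of_le {Y : Type*} {T t : ℕ} (c₁ c₂ : ℕ → Y) (h : t ≤ T) :
    glueAt T c₁ c₂ t = c₁ t :=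
  if_pos h

lemma glueAt_of_ge {Y : Type*} {T t : ℕ} {c₁ c₂ : ℕ → Y} (hT : c₁ T = c₂ T) (h : T ≤ t) :
    glueAt T c₁ c₂ t = c₂ t := by
  unfold glueAt
  split_ifs with h'
  · rw [le_antisymm h' h, hT]
  · rfl

lemma isChainOn_orbit (hδ : 0 < δ) (x : X) (s e : ℕ) : IsChainOn f δ (fun t => f^[t] x) s e :=
  fun t _ _ => by simpa only [iterate_succ_apply', dist_self] using hδ

lemma IsChainOn.glueAt {c₁ c₂ : ℕ → X} {s T e : ℕ} (h₁ : IsChainOn f δ c₁ s T)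
    (h₂ : IsChainOn f δ c₂ T e) (hT : c₁ T = c₂ T) : IsChainOn f δ (glueAt T c₁ c₂) s e := by
  intro t hst hte
  rcases lt_or_ge t T with htT | hTt
  · rw [glueAt_of_le _ _ htT.le, glueAt_of_le _ _ htT]
    exact h₁ t hst htT
  · rw [glueAt_of_ge hT hTt, glueAt_of_ge hT (hTt.trans t.le_succ)]
    exact h₂ t hTt hte

lemma HasChain.exists_isChainOn {n : ℕ} {u v : X} (h : HasChain f δ n u v) (s : ℕ) :
    ∃ c : ℕ → X, c s = u ∧ c (s + n) = v ∧ IsChainOn f δ c s (s + n) := by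
  obtain ⟨c, rfl, rfl, hc⟩ := h
  refine ⟨fun t => c (t - s), by simp, by simp, fun t h₁ h₂ => ?_⟩
  simpa only [show t + 1 - s = t - s + 1 by omega] using hc (t - s) (by omega) (by omega)

lemma hasChain_zero (v : X) : HasChain f δ 0 v v :=
  ⟨fun _ => v, rfl, rfl, fun _ _ h => absurd h (Nat.not_lt_zero _)⟩

lemma HasChain.trans {m n : ℕ} {u v w : X} (h₁ : HasChain f δ m u v) (h₂ : HasChain f δ n v w) :
    HasChain f δ (m + n) u w := by
  obtain ⟨c₁, rfl, rfl, hc₁⟩ := h₁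
  obtain ⟨c₂, hc₂m, rfl, hc₂⟩ := h₂.exists_isChainOn m
  refine ⟨glueAt m c₁ c₂, glueAt_of_le _ _ m.zero_le, ?_, hc₁.glueAt hc₂ hc₂m.symm⟩
  rw [glueAt_of_ge hc₂m.symm (by omega)]

lemma HasChain.mul_left {n : ℕ} {v : X} (h : HasChain f δ n v v) (s : ℕ) :
    HasChain f δ (s * n) v v := by
  induction s with
  | zero => simpa using hasChain_zero v
  | succ s ih => simpa [add_mul] using ih.trans h

lemma hasChain_of_loops {L s : ℕ} {v : X} (hL : 0 < L) (h₁ : HasChain f δ L v v)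
    (h₂ : HasChain f δ (L + 1) v v) (hs : L * L ≤ s) : HasChain f δ s v v := by
  have hr : s % L ≤ s / L := (Nat.mod_lt s hL).le.trans ((Nat.le_div_iff_mul_le hL).2 hs)
  have hsum : (s / L - s % L) * L + s % L * (L + 1) = s := by
    have := Nat.div_add_mod s L
    zify [hr] at this ⊢
    linear_combination this
  rw [← hsum]
  exact (h₁.mul_left _).trans (h₂.mul_left _)

lemma hasChain_of_dist_iterate_lt {n : ℕ} {u v : X} (hn : 0 < n) (h : dist (f^[n] u) v < δ) :
    HasChain f δ n u v := by
  refine ⟨update (fun t => f^[t] u) n v, by simp [hn.ne], by simp, fun t _ htn => ?_⟩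
  rw [update_of_ne htn.ne, ← iterate_succ_apply' f t u]
  rcases eq_or_ne (t + 1) n with rfl | hne
  · simpa using h
  · rw [update_of_ne hne, dist_self]
    exact dist_nonneg.trans_lt h

lemma hasChain_succ_of_dist_lt {n : ℕ} {u y v : X} (hn : 0 < n) (hu : dist (f u) y < δ)
    (hv : dist (f^[n] y) v < δ) : HasChain f δ (n + 1) u v := by
  rw [add_comm]
  exact (hasChain_of_dist_iterate_lt one_pos hu).trans (hasChain_of_dist_iterate_lt hn hv)

lemma HasChain.of_dist_le {δ' : ℝ} {m : ℕ} {p q u v : X} (h : HasChain f δ' m p q) (hm : 0 < m)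
    (hδ : dist (f u) (f p) + δ' + dist q v ≤ δ) : HasChain f δ m u v := by
  obtain ⟨c, rfl, rfl, hc⟩ := h
  set c' : ℕ → X := fun t => if t = 0 then u else if t = m then v else c t
  refine ⟨c', if_pos rfl, by simp [c', hm.ne'], fun t _ htm => ?_⟩
  have hstart : dist (f (c' t)) (f (c t)) ≤ dist (f u) (f (c 0)) := by
    simp only [c']
    split_ifs with h₀ h₁
    · rw [h₀]
    · omega
    · simp
  have hend : dist (c (t + 1)) (c' (t + 1)) ≤ dist (c m) v := by
    simp only [c', Nat.add_one_ne_zero, if_false]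
    split_ifs with h₁
    · rw [h₁]
    · simp
  linarith [dist_triangle4 (f (c' t)) (f (c t)) (c (t + 1)) (c' (t + 1)), hc t (by omega) htm]

lemma IsChainOn.isPseudoOrbit_mod {c : ℕ → X} {s p : ℕ} (hp : 0 < p)
    (hc : IsChainOn f δ c s (s + p)) (hcp : c (s + p) = c s) :
    IsPseudoOrbit f δ (fun n => c (s + n % p)) := by
  intro n
  show dist (f (c (s + n % p))) (c (s + (n + 1) % p)) < δ
  have hr := Nat.mod_lt n hp
  have hn := Nat.div_add_mod n p
  have h := hc (s + n % p) (by omega) (by omega)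
  rcases eq_or_ne (n % p + 1) p with hlast | hlast
  · have : (n + 1) % p = 0 := by
      rw [show n + 1 = p * (n / p + 1) by rw [mul_add]; omega, Nat.mul_mod_right]
    rw [add_assoc, hlast, hcp] at h
    rwa [this, add_zero]
  · have : (n + 1) % p = n % p + 1 := by
      rw [show n + 1 = n % p + 1 + p * (n / p) by omega, Nat.add_mul_mod_self_left,
        Nat.mod_eq_of_lt (by omega)]
    rwa [this, ← add_assoc]

end Chains

section WeakMixing

variable [TopologicalSpace X] {f : X → X}

lemma WeaklyMixing.exists_iterate_mem_pair (hwm : WeaklyMixing f) {U₁ V₁ U₂ V₂ : Set X}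
    (hU₁ : IsOpen U₁) (hU₁' : U₁.Nonempty) (hV₁ : IsOpen V₁) (hV₁' : V₁.Nonempty)
    (hU₂ : IsOpen U₂) (hU₂' : U₂.Nonempty) (hV₂ : IsOpen V₂) (hV₂' : V₂.Nonempty) :
    ∃ n, 0 < n ∧ (∃ y ∈ U₁, f^[n] y ∈ V₁) ∧ ∃ y ∈ U₂, f^[n] y ∈ V₂ := by
  obtain ⟨n, hn, -, ⟨y, hy, rfl⟩, hV⟩ := hwm (U₁ ×ˢ U₂) (V₁ ×ˢ V₂) (hU₁.prod hU₂)
    (hU₁'.prod hU₂') (hV₁.prod hV₂) (hV₁'.prod hV₂')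
  rw [show (fun p : X × X => (f p.1, f p.2)) = Prod.map f f from rfl, Prod.map_iterate] at hV
  exact ⟨n, hn, ⟨y.1, hy.1, hV.1⟩, y.2, hy.2, hV.2⟩

lemma WeaklyMixing.preimage_nonempty (hwm : WeaklyMixing f) {V : Set X} (hV : IsOpen V)
    (hV' : V.Nonempty) : (f ⁻¹' V).Nonempty := by
  obtain ⟨n, hn, ⟨y, -, hy⟩, -⟩ := hwm.exists_iterate_mem_pair hV hV' hV hV' hV hV' hV hV'
  refine ⟨f^[n - 1] y, ?_⟩
  rw [mem_preimage, ← iterate_succ_apply' f (n - 1) y, Nat.succ_eq_add_one, Nat.sub_add_cancel hn]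
  exact hy

end WeakMixing

section ChainMixing

variable [MetricSpace X] {f : X → X}

lemma WeaklyMixing.eventually_hasChain (hwm : WeaklyMixing f) (hf : Continuous f) {δ : ℝ}
    (hδ : 0 < δ) (u v : X) : ∀ᶠ m in atTop, HasChain f δ m u v := by
  have hball (w : X) : (ball w δ).Nonempty := ⟨w, mem_ball_self hδ⟩
  obtain ⟨n, hn, ⟨y₁, hy₁, hfy₁⟩, y₂, hy₂, hfy₂⟩ := hwm.exists_iterate_mem_pair isOpen_ball
    (hball (f v)) isOpen_ball (hball v) isOpen_ball (hball (f v)) (isOpen_ball.preimage hf)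
    (hwm.preimage_nonempty isOpen_ball (hball v))
  have hloop₁ : HasChain f δ (n + 1) v v :=
    hasChain_succ_of_dist_lt hn (mem_ball'.1 hy₁) (mem_ball.1 hfy₁)
  have hloop₂ : HasChain f δ (n + 1 + 1) v v := by
    refine hasChain_succ_of_dist_lt n.succ_pos (mem_ball'.1 hy₂) ?_
    rw [iterate_succ_apply']
    exact mem_ball.1 hfy₂
  obtain ⟨l, hl, ⟨y, hy, hfy⟩, -⟩ := hwm.exists_iterate_mem_pair isOpen_ball (hball (f u))
    isOpen_ball (hball v) isOpen_ball (hball (f u)) isOpen_ball (hball v)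
  have huv : HasChain f δ (l + 1) u v :=
    hasChain_succ_of_dist_lt hl (mem_ball'.1 hy) (mem_ball.1 hfy)
  filter_upwards [eventually_ge_atTop (l + 1 + (n + 1) * (n + 1))] with m hm
  have := huv.trans (hasChain_of_loops (s := m - (l + 1)) (by omega) hloop₁ hloop₂ (by omega))
  rwa [Nat.add_sub_cancel' (by omega)] at this

/-- A `δ / 2`-chain from `p` to `q` is turned into a `δ`-chain from `u` to `v` whenever `f u` is
`δ / 4`-close to `f p` and `v` is `δ / 4`-close to `q`; compactness makes finitely many such
neighbourhoods suffice. -/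
theorem WeaklyMixing.chainMixing [CompactSpace X] (hwm : WeaklyMixing f) (hf : Continuous f) :
    ChainMixing f := by
  intro δ hδ
  suffices ∀ᶠ m in atTop, ∀ r ∈ (univ : Set (X × X)), HasChain f δ m r.1 r.2 by
    simpa using this
  refine isCompact_univ.induction_on (by simp) (fun s t hst ht => ?_) (fun s t hs ht => ?_) ?_
  · exact ht.mono fun m hm r hr => hm r (hst hr)
  · filter_upwards [hs, ht] with m hms hmt r hr
    exact hr.elim (hms r) (hmt r)
  · rintro ⟨p, q⟩ -
    have hδ₄ : 0 < δ / 4 := by positivity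
    refine ⟨(f ⁻¹' ball (f p) (δ / 4)) ×ˢ ball q (δ / 4), mem_nhdsWithin_of_mem_nhds
      (prod_mem_nhds (hf.continuousAt (ball_mem_nhds _ hδ₄)) (ball_mem_nhds _ hδ₄)), ?_⟩
    filter_upwards [hwm.eventually_hasChain hf (half_pos hδ) p q, eventually_gt_atTop 0]
      with m hm hm₀
    rintro ⟨u, v⟩ ⟨hu, hv⟩
    refine hm.of_dist_le hm₀ ?_
    linarith [mem_ball.1 (mem_preimage.1 hu), mem_ball'.1 hv]

end ChainMixing

def SpacedIntervals (k M : ℕ) (a b : ℕ → ℕ) : Prop :=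
  (∀ i < k, a i ≤ b i) ∧ ∀ i, i + 1 < k → b i + M ≤ a (i + 1)

namespace SpacedIntervals

variable {k M : ℕ} {a b : ℕ → ℕ}

lemma b_mono (h : SpacedIntervals k M a b) {i i' : ℕ} (hii' : i ≤ i') (hi' : i' < k) :
    b i ≤ b i' := by
  induction i', hii' using Nat.le_induction with
  | base => rfl
  | succ n hn ih =>
    have := h.1 (n + 1) hi'
    have := h.2 n hi'
    have := ih (by omega)
    omega

lemma mem_Icc (h : SpacedIntervals k M a b) {i j : ℕ} (hi : i < k) (hj : j ∈ Icc (a i) (b i)) :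
    j ∈ Icc (a 0) (b (k - 1)) := by
  refine ⟨?_, hj.2.trans (h.b_mono (by omega) (by omega))⟩
  rcases i with _ | n
  · exact hj.1
  · have := h.1 0 (by omega)
    have := h.b_mono (Nat.zero_le n) (by omega)
    have := h.2 n hi
    linarith [hj.1]

variable [MetricSpace X] {f : X → X} {δ : ℝ}

lemma exists_isChainOn (h : SpacedIntervals k M a b) (hδ : 0 < δ)
    (hM : ∀ m ≥ M, ∀ u v : X, HasChain f δ m u v) (x : ℕ → X) :
    ∀ i < k, ∃ c : ℕ → X, IsChainOn f δ c (a 0) (b i) ∧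
      ∀ i' ≤ i, ∀ j, a i' ≤ j → j ≤ b i' → c j = f^[j] (x i') := by
  intro i
  induction i with
  | zero =>
    exact fun _ => ⟨fun t => f^[t] (x 0), isChainOn_orbit hδ _ _ _,
      fun i' hi' _ _ _ => by rw [Nat.le_zero.1 hi']⟩
  | succ i ih =>
    intro hi
    obtain ⟨c, hc, hcx⟩ := ih (by omega)
    have hgap := h.2 i hi
    obtain ⟨g, hg₀, hg₁, hg⟩ := (hM (a (i + 1) - b i) (by omega) (f^[b i] (x i))
      (f^[a (i + 1)] (x (i + 1)))).exists_isChainOn (b i)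
    rw [Nat.add_sub_cancel' (by omega)] at hg₁ hg
    have hT₁ : c (b i) = g (b i) := by rw [hg₀, hcx i le_rfl _ (h.1 i (by omega)) le_rfl]
    have hT₂ : glueAt (b i) c g (a (i + 1)) = f^[a (i + 1)] (x (i + 1)) := by
      rw [glueAt_of_ge hT₁ (by omega), hg₁]
    refine ⟨glueAt (a (i + 1)) (glueAt (b i) c g) (fun t => f^[t] (x (i + 1))),
      (hc.glueAt hg hT₁).glueAt (isChainOn_orbit hδ _ _ _) hT₂, fun i' hi' j hj₁ hj₂ => ?_⟩
    rcases Nat.le_succ_iff.1 hi' with hi' | rfl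
    · have := h.b_mono hi' (by omega : i < k)
      rw [glueAt_of_le _ _ (by omega), glueAt_of_le _ _ (by omega), hcx i' hi' j hj₁ hj₂]
    · exact glueAt_of_ge hT₂ hj₁

lemma exists_closed_isChainOn (h : SpacedIntervals k M a b) (hk : 0 < k) (hδ : 0 < δ)
    (hM : ∀ m ≥ M, ∀ u v : X, HasChain f δ m u v) (x : ℕ → X) {p : ℕ}
    (hp : M + b (k - 1) - a 0 ≤ p) :
    ∃ c : ℕ → X, IsChainOn f δ c (a 0) (a 0 + p) ∧ c (a 0 + p) = c (a 0) ∧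
      ∀ i < k, ∀ j, a i ≤ j → j ≤ b i → c j = f^[j] (x i) := by
  obtain ⟨c, hc, hcx⟩ := h.exists_isChainOn hδ hM x (k - 1) (by omega)
  have hab : a 0 ≤ b (k - 1) := (h.1 0 hk).trans (h.b_mono (Nat.zero_le _) (by omega))
  obtain ⟨g, hg₀, hg₁, hg⟩ := (hM (a 0 + p - b (k - 1)) (by omega) (f^[b (k - 1)] (x (k - 1)))
    (f^[a 0] (x 0))).exists_isChainOn (b (k - 1))
  rw [Nat.add_sub_cancel' (by omega)] at hg₁ hg
  have hT : c (b (k - 1)) = g (b (k - 1)) := by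
    rw [hg₀, hcx (k - 1) le_rfl _ (h.1 _ (by omega)) le_rfl]
  refine ⟨glueAt (b (k - 1)) c g, hc.glueAt hg hT, ?_, fun i hi j hj₁ hj₂ => ?_⟩
  · rw [glueAt_of_ge hT (by omega), glueAt_of_le _ _ hab, hg₁,
      hcx 0 (Nat.zero_le _) _ le_rfl (h.1 0 hk)]
  · have := h.b_mono (by omega : i ≤ k - 1) (by omega)
    rw [glueAt_of_le _ _ (by omega), hcx i (by omega) j hj₁ hj₂]

end SpacedIntervals

lemma Function.IsPeriodicPt.exists_iterate_add_eq {α : Type*} {f : α → α} {p : ℕ} {w : α}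
    (hw : IsPeriodicPt f p w) (hp : 0 < p) (s : ℕ) :
    ∃ z, IsPeriodicPt f p z ∧ ∀ n, f^[s + n] z = f^[n] w := by
  refine ⟨f^[p * s - s] w, hw.apply_iterate _, fun n => ?_⟩
  have hps : s ≤ p * s := Nat.le_mul_of_pos_left s hp
  rw [← iterate_add_apply, show s + n + (p * s - s) = n + p * s by omega, iterate_add_apply,
    (hw.mul_const s).eq]

namespace PosExpansive

variable [MetricSpace X] {f : X → X} {β ε : ℝ}

lemma eq_of_traces (hβ : PosExpansive f β) (hε : 2 * ε ≤ β) {w w' : X} {y : ℕ → X}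
    (hw : Traces f ε w y) (hw' : Traces f ε w' y) : w = w' := by
  by_contra hne
  obtain ⟨n, hn⟩ := hβ.2 w w' hne
  linarith [dist_triangle_right (f^[n] w) (f^[n] w') (y n), hw n, hw' n]

lemma isPeriodicPt_of_traces (hβ : PosExpansive f β) (hε : 2 * ε ≤ β) {w : X} {y : ℕ → X}
    {p : ℕ} (hy : Periodic y p) (hw : Traces f ε w y) : IsPeriodicPt f p w :=
  hβ.eq_of_traces hε (fun n => by rw [← iterate_add_apply, ← hy n]; exact hw (n + p)) hw

lemma exists_isPeriodicPt_of_isChainOn (hβ : PosExpansive f β) (hε : 2 * ε ≤ β) {δ : ℝ}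
    (hsh : ∀ y : ℕ → X, IsPseudoOrbit f δ y → ∃ w, Traces f ε w y) {c : ℕ → X} {s p : ℕ}
    (hc : IsChainOn f δ c s (s + p)) (hcp : c (s + p) = c s) :
    ∃ z, IsPeriodicPt f p z ∧ ∀ j, s ≤ j → j < s + p → dist (f^[j] z) (c j) < ε := by
  rcases p.eq_zero_or_pos with rfl | hp
  · exact ⟨c s, isPeriodicPt_zero f _, fun j h₁ h₂ => by omega⟩
  obtain ⟨w, hw⟩ := hsh _ (hc.isPseudoOrbit_mod hp hcp)
  have hwp : IsPeriodicPt f p w :=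
    hβ.isPeriodicPt_of_traces hε (fun n => by simp only [Nat.add_mod_right]) hw
  obtain ⟨z, hz, hzw⟩ := hwp.exists_iterate_add_eq hp s
  refine ⟨z, hz, fun j hj₁ hj₂ => ?_⟩
  obtain ⟨n, rfl⟩ := Nat.exists_eq_add_of_le hj₁
  simpa only [hzw, Nat.mod_eq_of_lt (by omega : n < p)] using hw n

end PosExpansive

theorem weak_mixing_expansive_shadowing_periodic_specification [MetricSpace X] [CompactSpace X]
    (f : X → X) (hf : Continuous f) (hwm : WeaklyMixing f)
    (hexp : ∃ β : ℝ, PosExpansive f β) (hsh : HasShadowing f) :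
    ∀ ε > (0 : ℝ), ∃ M : ℕ, 0 < M ∧
      ∀ k : ℕ, 2 ≤ k → ∀ x : ℕ → X, ∀ a b : ℕ → ℕ,
        (∀ i < k, a i ≤ b i) →
        (∀ i, i + 1 < k → b i + M ≤ a (i + 1)) →
        ∀ p : ℕ, M + b (k - 1) - a 0 ≤ p →
        ∃ z : X, f^[p] z = z ∧
          ∀ i < k, ∀ j : ℕ, a i ≤ j → j ≤ b i →
            dist (f^[j] z) (f^[j] (x i)) < ε := by
  intro ε hε
  obtain ⟨β, hβ⟩ := hexp
  obtain ⟨δ, hδ, hshadow⟩ := hsh (min ε (β / 2)) (lt_min hε (half_pos hβ.1))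
  obtain ⟨N, hN⟩ := eventually_atTop.1 (hwm.chainMixing hf δ hδ)
  refine ⟨N + 1, N.succ_pos, fun k hk x a b hab hgap p hp => ?_⟩
  have hI : SpacedIntervals k (N + 1) a b := ⟨hab, hgap⟩
  obtain ⟨c, hc, hcp, hcx⟩ :=
    hI.exists_closed_isChainOn (by omega) hδ (fun m hm => hN m (by omega)) x hp
  obtain ⟨z, hz, hzc⟩ := hβ.exists_isPeriodicPt_of_isChainOn
    (by linarith [min_le_right ε (β / 2)]) hshadow hc hcp
  refine ⟨z, hz, fun i hi j hj₁ hj₂ => ?_⟩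
  obtain ⟨hj₀, hjk⟩ := hI.mem_Icc hi ⟨hj₁, hj₂⟩
  rw [← hcx i hi j hj₁ hj₂]
  exact (hzc j (by omega) (by omega)).trans_le (min_le_left _ _)
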